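/- arXiv:2002.07475 — 3 statements merged into one kernel-verified Lean document; each statement's English description precedes it below -/
import Mathlib

section
/- Let f be a real additive function such that Σ_{p : f(p)≠0} 1/p < ∞. Then Σ_{m ≥ 1} h_f(m)/m = ∏_p 1/(1 − w_p), both sides being finite; consequently the function F(y) := ∏_p (1 − w_p) · Σ_{m : f(m) ≤ y} h_f(m)/m is a distribution function (non-decreasing, with limit 0 at −∞ and 1 at +∞). -/
open Filter Topology Finset MeasureTheory
open scoped Classical

noncomputable section

/-- A real additive arithmetic function. -/
def IsAdditive (f : ℕ → ℝ) : Prop :=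
  ∀ m n : ℕ, 0 < m → 0 < n → Nat.Coprime m n → f (m * n) = f m + f n

/-- A real strongly additive arithmetic function. -/
def IsStronglyAdditive (f : ℕ → ℝ) : Prop :=
  IsAdditive f ∧ ∀ p ν : ℕ, p.Prime → 1 ≤ ν → f (p ^ ν) = f p

/-- Convergence of the two Erdős–Wintner series. -/
def EWConv (f : ℕ → ℝ) : Prop :=
  Summable (fun p : Nat.Primes => min 1 (f p ^ 2) / (p : ℝ)) ∧
  ∃ ℓ : ℝ, Tendsto (fun N : ℕ =>
      ∑ p ∈ (Finset.range N).filter (fun p => Nat.Prime p ∧ |f p| ≤ 1), f p / (p : ℝ))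
    atTop (𝓝 ℓ)

/-- The series over primes with f(p) ≠ 0 of 1/p. -/
def DivergentCase (f : ℕ → ℝ) : Prop :=
  ¬ Summable (fun p : Nat.Primes => if f (p : ℕ) ≠ 0 then (1 : ℝ) / (p : ℕ) else 0)

def EtaBound (f : ℕ → ℝ) (η : ℝ → ℝ) : Prop :=
  Continuous η ∧ Antitone η ∧ Tendsto η atTop (𝓝 0) ∧
  (∀ y : ℝ, 1 ≤ y → ∃ ℓ : ℝ,
    Tendsto (fun N : ℕ =>
        ∑ p ∈ (Finset.range N).filter (fun p => Nat.Prime p ∧ y < (p : ℝ) ∧ |f p| ≤ 1),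
          f p / (p : ℝ)) atTop (𝓝 ℓ) ∧ |ℓ| ≤ η y) ∧
  (∀ y : ℝ, 1 ≤ y →
    (∑' n : ℕ, if IsPrimePow n ∧ y < (n : ℝ) then min 1 (f n ^ 2) / (n : ℝ) else 0) ≤ η y)

/-- The truncated additive function f_R. -/
def fR (f : ℕ → ℝ) (R : ℝ) (n : ℕ) : ℝ :=
  ∑ p ∈ n.primeFactors,
    (if ((p ^ (n.factorization p) : ℕ) : ℝ) ≤ R ∨ |f (p ^ (n.factorization p))| ≤ 1
      then f (p ^ (n.factorization p)) else 0)

/-- B_f(v) := sqrt(2 + Σ_{p^ν ≤ v} f(p^ν)²/p^ν). -/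
def Bf (f : ℕ → ℝ) (v : ℝ) : ℝ :=
  Real.sqrt (2 + ∑ n ∈ (Finset.Icc 2 ⌊v⌋₊).filter IsPrimePow, f n ^ 2 / (n : ℝ))

/-- π_k(x) = #{n ≤ x : ω(n) = k}. -/
def pik (x : ℝ) (k : ℕ) : ℕ :=
  ((Finset.Icc 1 ⌊x⌋₊).filter (fun n => n.primeFactors.card = k)).card

/-- The empirical distribution function. -/
def Fx (f : ℕ → ℝ) (x : ℝ) (y : ℝ) : ℝ :=
  (((Finset.Icc 1 ⌊x⌋₊).filter (fun n => f n ≤ y)).card : ℝ) / x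

def uf (f : ℕ → ℝ) (m : ℕ) : ℝ :=
  if ∀ p ∈ m.primeFactors, f (p ^ (m.factorization p)) ≠ 0 then 1 else 0

def vf (f : ℕ → ℝ) (d : ℕ) : ℝ :=
  if ∀ p ∈ d.primeFactors, f (p ^ (d.factorization p)) = 0 then 1 else 0

def wp (f : ℕ → ℝ) (p : ℕ) : ℝ :=
  (1 - 1 / (p : ℝ)) * ∑' ν : ℕ, uf f (p ^ (ν + 1)) / (p : ℝ) ^ (ν + 1)

def hf (f : ℕ → ℝ) (m : ℕ) : ℝ :=
  uf f m * ∏ p ∈ m.primeFactors, (1 - 1 / (p : ℝ)) / (1 - wp f p)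

def alphaf (f : ℕ → ℝ) (y : ℝ) : ℝ :=
  ∑' p : Nat.Primes, if y < ((p : ℕ) : ℝ) then uf f (p : ℕ) / ((p : ℕ) : ℝ) else 0

def betaf (f : ℕ → ℝ) (y : ℝ) : ℝ :=
  (1 / Real.log y) * ∫ t in (1:ℝ)..y, alphaf f t / t

def Flim (f : ℕ → ℝ) (y : ℝ) : ℝ :=
  (∏' p : Nat.Primes, (1 - wp f (p : ℕ))) *
    ∑' m : ℕ, if 1 ≤ m ∧ f m ≤ y then hf f m / m else 0


/-! The terms `h_f(m)/m` form a nonnegative multiplicative function whose local factor at `p` is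
`1 + (1 - 1/p) S_p / (1 - w_p) = 1 / (1 - w_p)`. Since `w_p ≤ 1/p`, the part `(1 - 1/p)/(1 - w_p)`
is at most `1`, so the local factor minus one is at most
`S_p ≤ 1_{f(p) ≠ 0}/p + 2/p²`, which is summable over primes. Hence the partial sums of the series
are bounded by `exp (Σ_p S_p)`, and the Euler product identity follows. Then `F` is the normalised
distribution function of the finite measure with mass `h_f(m)/m` at `f(m)`, whose limits at `±∞`
come from dominated convergence. -/

open EulerProduct in
theorem summable_of_summable_tsum_prime_pow_succ {g : ℕ → ℝ} (hg : 0 ≤ g) (hg₀ : g 0 = 0)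
    (hg₁ : g 1 = 1) (hmul : ∀ {m n : ℕ}, m.Coprime n → g (m * n) = g m * g n)
    (hloc : ∀ {p : ℕ}, p.Prime → Summable fun e => g (p ^ e))
    (hprimes : Summable fun p : Nat.Primes => ∑' e, g ((p : ℕ) ^ (e + 1))) :
    Summable g := by
  set x : ℕ → ℝ := fun p => ∑' e, g (p ^ (e + 1))
  have hlocal_le : ∀ {p : ℕ}, p.Prime → ∑' e, g (p ^ e) ≤ Real.exp (x p) := fun hp => by
    rw [(hloc hp).tsum_eq_zero_add, pow_zero, hg₁, add_comm]
    exact Real.add_one_le_exp _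
  refine summable_of_sum_range_le (c := Real.exp (∑' p : Nat.Primes, x p)) hg fun N => ?_
  have hsmooth := hasSum_subtype_iff_indicator.mp
    (summable_and_hasSum_smoothNumbers_prod_primesBelow_tsum hg₁ hmul
      (fun hp => (hloc hp).norm) N).2
  calc ∑ m ∈ Finset.range N, g m
      = ∑ m ∈ Finset.range N, N.smoothNumbers.indicator g m := by
        refine Finset.sum_congr rfl fun m hm => (Set.indicator_apply_eq_self.mpr fun hms => ?_).symm
        obtain rfl : m = 0 := by
          by_contra h
          exact hms (Nat.mem_smoothNumbers_of_lt (Nat.pos_of_ne_zero h) (Finset.mem_range.mp hm))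
        exact hg₀
    _ ≤ ∏ p ∈ N.primesBelow, ∑' e, g (p ^ e) :=
        sum_le_hasSum _ (fun m _ => Set.indicator_nonneg (fun m _ => hg m) m) hsmooth
    _ ≤ ∏ p ∈ N.primesBelow, Real.exp (x p) :=
        Finset.prod_le_prod (fun p _ => tsum_nonneg fun e => hg _)
          fun p hp => hlocal_le (Nat.prime_of_mem_primesBelow hp)
    _ = Real.exp (∑ p ∈ N.primesBelow, x p) := (Real.exp_sum _ _).symm
    _ ≤ Real.exp (∑' p : Nat.Primes, x p) := by
        gcongr
        rw [Nat.primesBelow, ← Finset.sum_subtype_eq_sum_filter]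
        exact Summable.sum_le_tsum (f := fun p : Nat.Primes => x p) _
          (fun p _ => tsum_nonneg fun e => hg _) hprimes

section GeometricBound

variable {a : ℕ → ℝ} {q : ℝ}

theorem hasSum_one_div_pow_succ (hq : 1 < q) :
    HasSum (fun ν : ℕ => 1 / q ^ (ν + 1)) (1 / (q - 1)) := by
  have hgeom := (hasSum_geometric_of_lt_one (by positivity) (inv_lt_one_of_one_lt₀ hq)).mul_left q⁻¹
  have hterm : (fun ν : ℕ => 1 / q ^ (ν + 1)) = fun ν => q⁻¹ * q⁻¹ ^ ν :=
    funext fun ν => by rw [pow_succ', inv_pow, ← mul_inv, one_div]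
  have hvalue : 1 / (q - 1) = q⁻¹ * (1 - q⁻¹)⁻¹ := by
    field_simp [sub_ne_zero.mpr hq.ne']
  rwa [hterm, hvalue]

theorem summable_div_pow_succ (ha : 0 ≤ a) (ha' : a ≤ 1) (hq : 1 < q) :
    Summable fun ν => a ν / q ^ (ν + 1) :=
  (hasSum_one_div_pow_succ hq).summable.of_nonneg_of_le
    (fun ν => div_nonneg (ha ν) (by positivity))
    (fun ν => div_le_div_of_nonneg_right (ha' ν) (by positivity))

theorem tsum_div_pow_succ_le (ha : 0 ≤ a) (ha' : a ≤ 1) (hq : 1 < q) :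
    ∑' ν, a ν / q ^ (ν + 1) ≤ 1 / (q - 1) :=
  hasSum_le (fun ν => div_le_div_of_nonneg_right (ha' ν) (by positivity))
    (summable_div_pow_succ ha ha' hq).hasSum (hasSum_one_div_pow_succ hq)

theorem tsum_div_pow_succ_le_add (ha : 0 ≤ a) (ha' : a ≤ 1) (hq : 1 < q) :
    ∑' ν, a ν / q ^ (ν + 1) ≤ a 0 / q + 1 / (q * (q - 1)) := by
  have htail : ∑' ν, a (ν + 1) / q ^ (ν + 1 + 1) = (∑' ν, a (ν + 1) / q ^ (ν + 1)) / q := by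
    rw [← tsum_div_const]
    simp only [pow_succ _ (_ + 1), div_div]
  rw [(summable_div_pow_succ ha ha' hq).tsum_eq_zero_add, zero_add, pow_one, htail,
    mul_comm q, ← div_div]
  gcongr
  exact tsum_div_pow_succ_le (fun ν => ha (ν + 1)) (fun ν => ha' (ν + 1)) hq

end GeometricBound

section LocalFactor

variable (f : ℕ → ℝ)

theorem uf_nonneg (m : ℕ) : 0 ≤ uf f m := by
  unfold uf; split <;> norm_num

theorem uf_le_one (m : ℕ) : uf f m ≤ 1 := by
  unfold uf; split <;> norm_num

theorem uf_one : uf f 1 = 1 := by simp [uf]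

theorem uf_prime {p : ℕ} (hp : p.Prime) : uf f p = if f p ≠ 0 then 1 else 0 := by
  simp [uf, hp.primeFactors, hp.factorization_self]

theorem uf_mul {m n : ℕ} (h : m.Coprime n) : uf f (m * n) = uf f m * uf f n := by
  have key : (∀ q ∈ (m * n).primeFactors, f (q ^ (m * n).factorization q) ≠ 0) ↔
      (∀ q ∈ m.primeFactors, f (q ^ m.factorization q) ≠ 0) ∧
        ∀ q ∈ n.primeFactors, f (q ^ n.factorization q) ≠ 0 := by
    rw [h.primeFactors_mul, Finset.forall_mem_union]
    refine and_congr (forall₂_congr fun q hq => ?_) (forall₂_congr fun q hq => ?_)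
    · rw [Nat.factorization_eq_of_coprime_left h
        (Nat.mem_primeFactors_iff_mem_primeFactorsList.mp hq)]
    · rw [Nat.factorization_eq_of_coprime_right h
        (Nat.mem_primeFactors_iff_mem_primeFactorsList.mp hq)]
  simp only [uf, key]
  split_ifs <;> simp_all

/-- The `S_p` of the paper; `wp f p = (1 - 1 / p) * Sp f p` holds by `rfl`. -/
def Sp (p : ℕ) : ℝ := ∑' ν : ℕ, uf f (p ^ (ν + 1)) / (p : ℝ) ^ (ν + 1)

variable {p : ℕ} (hp : p.Prime)
include hp

theorem summable_uf_prime_pow_div :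
    Summable fun ν : ℕ => uf f (p ^ (ν + 1)) / (p : ℝ) ^ (ν + 1) :=
  summable_div_pow_succ (a := fun ν => uf f (p ^ (ν + 1))) (fun _ => uf_nonneg f _)
    (fun _ => uf_le_one f _) (by exact_mod_cast hp.one_lt)

omit hp in
theorem Sp_nonneg : 0 ≤ Sp f p :=
  tsum_nonneg fun _ => div_nonneg (uf_nonneg f _) (by positivity)

theorem Sp_le_ite_add : Sp f p ≤ (if f p ≠ 0 then 1 / (p : ℝ) else 0) + 2 / (p : ℝ) ^ 2 := by
  have hp₂ : (2 : ℝ) ≤ p := by exact_mod_cast hp.two_le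
  refine (tsum_div_pow_succ_le_add (a := fun ν => uf f (p ^ (ν + 1))) (fun _ => uf_nonneg f _)
    (fun _ => uf_le_one f _) (by exact_mod_cast hp.one_lt)).trans (add_le_add ?_ ?_)
  · simp only [zero_add, pow_one, uf_prime f hp]
    split_ifs <;> simp
  · rw [div_le_div_iff₀ (by nlinarith) (by positivity)]
    nlinarith

theorem wp_le_inv : wp f p ≤ 1 / p := by
  have hp₁ : (1 : ℝ) < p := by exact_mod_cast hp.one_lt
  calc wp f p = (1 - 1 / p) * Sp f p := rfl
    _ ≤ (1 - 1 / p) * (1 / (p - 1)) := by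
        gcongr
        · rw [sub_nonneg, div_le_one (by positivity)]; exact hp₁.le
        · exact tsum_div_pow_succ_le (a := fun ν => uf f (p ^ (ν + 1))) (fun _ => uf_nonneg f _)
            (fun _ => uf_le_one f _) hp₁
    _ = 1 / p := by
        field_simp [sub_ne_zero.mpr hp₁.ne']

theorem one_sub_wp_pos : 0 < 1 - wp f p := by
  have : 1 / (p : ℝ) < 1 :=
    (div_lt_one (by exact_mod_cast hp.pos)).mpr (by exact_mod_cast hp.one_lt)
  linarith [wp_le_inv f hp]

theorem localRatio_nonneg : 0 ≤ (1 - 1 / (p : ℝ)) / (1 - wp f p) := by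
  have : 1 / (p : ℝ) ≤ 1 :=
    (div_le_one (by exact_mod_cast hp.pos)).mpr (by exact_mod_cast hp.one_lt.le)
  exact div_nonneg (by linarith) (one_sub_wp_pos f hp).le

theorem localRatio_le_one : (1 - 1 / (p : ℝ)) / (1 - wp f p) ≤ 1 := by
  rw [div_le_one (one_sub_wp_pos f hp)]
  linarith [wp_le_inv f hp]

end LocalFactor

section Series

variable (f : ℕ → ℝ)

theorem hf_nonneg (m : ℕ) : 0 ≤ hf f m :=
  mul_nonneg (uf_nonneg f m) <|
    Finset.prod_nonneg fun _ hq => localRatio_nonneg f (Nat.prime_of_mem_primeFactors hq)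

theorem hf_mul {m n : ℕ} (h : m.Coprime n) : hf f (m * n) = hf f m * hf f n := by
  rw [hf, hf, hf, uf_mul f h, h.primeFactors_mul, Finset.prod_union h.disjoint_primeFactors]
  ring

def hfTerm (m : ℕ) : ℝ := if 1 ≤ m then hf f m / m else 0

theorem hfTerm_nonneg : 0 ≤ hfTerm f := fun m => by
  unfold hfTerm
  split_ifs
  exacts [div_nonneg (hf_nonneg f m) m.cast_nonneg, le_rfl]

theorem hfTerm_zero : hfTerm f 0 = 0 := by simp [hfTerm]

theorem hfTerm_one : hfTerm f 1 = 1 := by simp [hfTerm, hf, uf_one]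

theorem hfTerm_mul {m n : ℕ} (h : m.Coprime n) :
    hfTerm f (m * n) = hfTerm f m * hfTerm f n := by
  rcases Nat.eq_zero_or_pos m with rfl | (hm : 1 ≤ m)
  · simp [hfTerm_zero]
  rcases Nat.eq_zero_or_pos n with rfl | (hn : 1 ≤ n)
  · simp [hfTerm_zero]
  have hmn : 1 ≤ m * n := Nat.mul_pos hm hn
  rw [hfTerm, hfTerm, hfTerm, if_pos hm, if_pos hn, if_pos hmn, hf_mul f h, Nat.cast_mul,
    mul_div_mul_comm]

variable {p : ℕ} (hp : p.Prime)
include hp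

theorem hfTerm_prime_pow_succ (e : ℕ) :
    hfTerm f (p ^ (e + 1)) =
      (1 - 1 / (p : ℝ)) / (1 - wp f p) * (uf f (p ^ (e + 1)) / (p : ℝ) ^ (e + 1)) := by
  rw [hfTerm, if_pos (Nat.one_le_pow _ _ hp.pos), hf,
    Nat.primeFactors_prime_pow e.succ_ne_zero hp, Finset.prod_singleton]
  push_cast
  ring

theorem hasSum_hfTerm_prime_pow_succ :
    HasSum (fun e => hfTerm f (p ^ (e + 1))) ((1 - 1 / (p : ℝ)) / (1 - wp f p) * Sp f p) := by
  simp only [hfTerm_prime_pow_succ f hp]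
  exact (summable_uf_prime_pow_div f hp).hasSum.mul_left _

theorem hasSum_hfTerm_prime_pow : HasSum (fun e => hfTerm f (p ^ e)) (1 / (1 - wp f p)) := by
  have hsum := (hasSum_hfTerm_prime_pow_succ f hp).zero_add (f := fun e => hfTerm f (p ^ e))
  have hvalue :
      hfTerm f (p ^ 0) + (1 - 1 / (p : ℝ)) / (1 - wp f p) * Sp f p = 1 / (1 - wp f p) := by
    have hwp : (1 - 1 / (p : ℝ)) * Sp f p = wp f p := rfl
    have hpos := one_sub_wp_pos f hp
    rw [pow_zero, hfTerm_one, div_mul_eq_mul_div, hwp]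
    field_simp
    ring
  rwa [hvalue] at hsum

theorem tsum_hfTerm_prime_pow_succ_le : ∑' e, hfTerm f (p ^ (e + 1)) ≤ Sp f p := by
  rw [(hasSum_hfTerm_prime_pow_succ f hp).tsum_eq]
  exact mul_le_of_le_one_left (Sp_nonneg f) (localRatio_le_one f hp)

omit hp

theorem summable_tsum_hfTerm_prime_pow_succ
    (hfin : Summable fun p : Nat.Primes => if f p ≠ 0 then (1 : ℝ) / (p : ℕ) else 0) :
    Summable fun p : Nat.Primes => ∑' e, hfTerm f ((p : ℕ) ^ (e + 1)) := by
  have hsq : Summable fun p : Nat.Primes => (2 : ℝ) / (p : ℕ) ^ 2 := by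
    have := ((Real.summable_one_div_nat_pow.mpr one_lt_two).mul_left 2).comp_injective
      (Subtype.val_injective (p := Nat.Prime))
    simp only [Function.comp_def, mul_one_div] at this
    exact this
  exact (hfin.add hsq).of_nonneg_of_le (fun _ => tsum_nonneg fun _ => hfTerm_nonneg f _)
    fun p => (tsum_hfTerm_prime_pow_succ_le f p.2).trans (Sp_le_ite_add f p.2)

variable (hfin : Summable fun p : Nat.Primes => if f p ≠ 0 then (1 : ℝ) / (p : ℕ) else 0)
include hfin

theorem summable_hfTerm : Summable (hfTerm f) :=
  summable_of_summable_tsum_prime_pow_succ (hfTerm_nonneg f) (hfTerm_zero f) (hfTerm_one f)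
    (hfTerm_mul f) (fun hp => (hasSum_hfTerm_prime_pow f hp).summable)
    (summable_tsum_hfTerm_prime_pow_succ f hfin)

theorem one_le_tsum_hfTerm : 1 ≤ ∑' m, hfTerm f m :=
  hfTerm_one f ▸ (summable_hfTerm f hfin).le_tsum 1 fun m _ => hfTerm_nonneg f m

theorem hasProd_inv_one_sub_wp :
    HasProd (fun p : Nat.Primes => 1 / (1 - wp f p)) (∑' m, hfTerm f m) := by
  have := EulerProduct.eulerProduct_hasProd (hfTerm_one f) (hfTerm_mul f)
    (summable_hfTerm f hfin).norm (hfTerm_zero f)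
  have hlocal : (fun p : Nat.Primes => ∑' e, hfTerm f ((p : ℕ) ^ e)) =
      fun p : Nat.Primes => 1 / (1 - wp f p) :=
    funext fun p => (hasSum_hfTerm_prime_pow f p.2).tsum_eq
  rwa [hlocal] at this

theorem hasProd_one_sub_wp :
    HasProd (fun p : Nat.Primes => 1 - wp f p) (∑' m, hfTerm f m)⁻¹ := by
  simpa only [one_div, inv_inv] using
    (hasProd_inv_one_sub_wp f hfin).inv₀ (one_pos.trans_le (one_le_tsum_hfTerm f hfin)).ne'

end Series

section CumulativeSum

variable {ι : Type*} (φ : ι → ℝ)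

theorem monotone_tsum_ite_le {g : ι → ℝ} (hg : ∀ i, 0 ≤ g i) (hs : Summable g) :
    Monotone fun y => ∑' i, if φ i ≤ y then g i else 0 := fun y z hyz =>
  Summable.tsum_le_tsum (fun i => by split_ifs <;> linarith [hg i])
    (hs.indicator {i | φ i ≤ y}) (hs.indicator {i | φ i ≤ z})

variable {G : Type*} [NormedAddCommGroup G] {g : ι → G}

theorem norm_ite_le_norm (y : ℝ) (i : ι) : ‖if φ i ≤ y then g i else 0‖ ≤ ‖g i‖ := by
  split_ifs <;> simp

theorem tendsto_tsum_ite_le_atBot [CompleteSpace G] (hs : Summable fun i => ‖g i‖) :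
    Tendsto (fun y => ∑' i, if φ i ≤ y then g i else 0) atBot (𝓝 0) := by
  simpa using tendsto_tsum_of_dominated_convergence hs (g := fun _ => 0)
    (fun i => tendsto_const_nhds.congr'
      ((eventually_lt_atBot (φ i)).mono fun _ hy => (if_neg hy.not_ge).symm))
    (Eventually.of_forall fun y i => norm_ite_le_norm φ y i)

theorem tendsto_tsum_ite_le_atTop [CompleteSpace G] (hs : Summable fun i => ‖g i‖) :
    Tendsto (fun y => ∑' i, if φ i ≤ y then g i else 0) atTop (𝓝 (∑' i, g i)) :=
  tendsto_tsum_of_dominated_convergence hs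
    (fun i => tendsto_const_nhds.congr'
      ((eventually_ge_atTop (φ i)).mono fun _ hy => (if_pos hy).symm))
    (Eventually.of_forall fun y i => norm_ite_le_norm φ y i)

end CumulativeSum

theorem Flim_eq_mul_tsum (f : ℕ → ℝ) (y : ℝ) :
    Flim f y = (∏' p : Nat.Primes, (1 - wp f p)) * ∑' m, if f m ≤ y then hfTerm f m else 0 := by
  unfold Flim hfTerm
  congr 2 with m
  split_ifs <;> simp_all

theorem hf_sum_eq_prod_and_F_distribution_general (f : ℕ → ℝ)
    (hfin : Summable (fun p : Nat.Primes => if f (p : ℕ) ≠ 0 then (1 : ℝ) / ((p : ℕ) : ℝ) else 0)) :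
    Summable (fun m : ℕ => if 1 ≤ m then hf f m / m else 0) ∧
    Multipliable (fun p : Nat.Primes => 1 / (1 - wp f (p : ℕ))) ∧
    (∑' m : ℕ, if 1 ≤ m then hf f m / m else 0) =
      (∏' p : Nat.Primes, 1 / (1 - wp f (p : ℕ))) ∧
    Monotone (Flim f) ∧
    Tendsto (Flim f) atBot (𝓝 0) ∧
    Tendsto (Flim f) atTop (𝓝 1) := by
  have hs := summable_hfTerm f hfin
  have hprod := hasProd_inv_one_sub_wp f hfin
  have htotal : 0 < ∑' m, hfTerm f m := one_pos.trans_le (one_le_tsum_hfTerm f hfin)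
  have hFlim : Flim f = fun y => (∑' m, hfTerm f m)⁻¹ * ∑' m, if f m ≤ y then hfTerm f m else 0 :=
    funext fun y => by rw [Flim_eq_mul_tsum, (hasProd_one_sub_wp f hfin).tprod_eq]
  refine ⟨hs, hprod.multipliable, hprod.tprod_eq.symm, ?_, ?_, ?_⟩ <;> rw [hFlim]
  · exact (monotone_tsum_ite_le f (hfTerm_nonneg f) hs).const_mul (inv_nonneg.mpr htotal.le)
  · simpa using (tendsto_tsum_ite_le_atBot f hs.norm).const_mul (∑' m, hfTerm f m)⁻¹
  · simpa [inv_mul_cancel₀ htotal.ne'] using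
      (tendsto_tsum_ite_le_atTop f hs.norm).const_mul (∑' m, hfTerm f m)⁻¹

/-- If `Σ_{f(p)≠0} 1/p < ∞` then `Σ_{m≥1} h_f(m)/m = ∏_p 1/(1 − w_p)`, both sides
being finite, and consequently `F` is a distribution function. -/
theorem hf_sum_eq_prod_and_F_distribution (f : ℕ → ℝ)
    (hadd : IsAdditive f)
    (hfin : Summable (fun p : Nat.Primes => if f (p : ℕ) ≠ 0 then (1 : ℝ) / ((p : ℕ) : ℝ) else 0)) :
    Summable (fun m : ℕ => if 1 ≤ m then hf f m / m else 0) ∧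
    Multipliable (fun p : Nat.Primes => 1 / (1 - wp f (p : ℕ))) ∧
    (∑' m : ℕ, if 1 ≤ m then hf f m / m else 0) =
      (∏' p : Nat.Primes, 1 / (1 - wp f (p : ℕ))) ∧
    Monotone (Flim f) ∧
    Tendsto (Flim f) atBot (𝓝 0) ∧
    Tendsto (Flim f) atTop (𝓝 1) :=
  hf_sum_eq_prod_and_F_distribution_general f hfin

end
end

section
/- Let f be a real additive function and R ≥ 3. Then, for every positive integer x and every y ∈ ℝ, one has |F_x(y; R) − F_x(y)| ≤ Σ_{p^ν > R, |f(p^ν)| > 1} 1/p^ν, where F_x(y; R) := (1/x)·#{n ≤ x : f_R(n) ≤ y} and F_x(y) := (1/x)·#{n ≤ x : f(n) ≤ y}. -/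
open Filter Topology Finset MeasureTheory
open scoped Classical

noncomputable section

/-! The integers `n ≤ x` at which `f_R` and `f` differ are multiples of some prime power
`q = p^ν ∥ n` with `q > R` and `|f(q)| > 1`; there are at most `x/q` multiples of each such `q`,
and the two distribution functions differ by at most the proportion of such `n`. -/

open scoped ENNReal

namespace IsAdditive

variable {f : ℕ → ℝ}

lemma map_one (h : IsAdditive f) : f 1 = 0 := by
  have := h 1 1 one_pos one_pos (Nat.coprime_one_left 1)
  simpa using this

lemma eq_sum_primeFactors (h : IsAdditive f) {n : ℕ} (hn : n ≠ 0) :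
    f n = ∑ p ∈ n.primeFactors, f (p ^ n.factorization p) := by
  change f n = n.factorization.sum fun p k => f (p ^ k)
  induction n using Nat.recOnPosPrimePosCoprime with
  | prime_pow p k hp hk => simp [hp.factorization_pow, Finsupp.sum_single_index, h.map_one]
  | zero => exact absurd rfl hn
  | one => simp [h.map_one]
  | coprime a b ha hb hab iha ihb =>
    rw [h a b (by omega) (by omega) hab, iha (by omega), ihb (by omega),
      Nat.factorization_mul_of_coprime hab,
      Finsupp.sum_add_index_of_disjoint hab.disjoint_primeFactors]

end IsAdditive

lemma exists_dvd_of_fR_ne {f : ℕ → ℝ} (hadd : IsAdditive f) {R : ℝ} {n : ℕ} (hn : n ≠ 0)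
    (hne : fR f R n ≠ f n) : ∃ q : ℕ, (IsPrimePow q ∧ R < q ∧ 1 < |f q|) ∧ q ∣ n := by
  by_contra! hgood
  refine hne ?_
  rw [fR, hadd.eq_sum_primeFactors hn]
  refine sum_congr rfl fun p hp => if_pos ?_
  obtain ⟨hpp, hpn, -⟩ := Nat.mem_primeFactors.1 hp
  have hpow : IsPrimePow (p ^ n.factorization p) :=
    (isPrimePow_pow_iff (hpp.factorization_pos_of_dvd hn hpn).ne').2 hpp.isPrimePow
  by_contra! hbad
  exact hgood _ ⟨hpow, hbad⟩ (Nat.ordProj_dvd n p)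

lemma card_filter_le_sub_card_filter_le_le {α : Type*} (s : Finset α) (g h : α → ℝ) (y : ℝ) :
    (#{n ∈ s | g n ≤ y} : ℝ) - #{n ∈ s | h n ≤ y} ≤ #{n ∈ s | g n ≠ h n} := by
  have hcover : {n ∈ s | g n ≤ y} ⊆ {n ∈ s | h n ≤ y} ∪ {n ∈ s | g n ≠ h n} := by
    intro n hn
    simp only [mem_union, mem_filter] at hn ⊢
    by_cases hgh : g n = h n
    · exact .inl ⟨hn.1, hgh ▸ hn.2⟩
    · exact .inr ⟨hn.1, hgh⟩
  have := (card_le_card hcover).trans (card_union_le _ _)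
  rw [sub_le_iff_le_add']
  exact_mod_cast this

lemma abs_card_filter_le_sub_card_filter_le_le {α : Type*} (s : Finset α) (g h : α → ℝ)
    (y : ℝ) : |(#{n ∈ s | g n ≤ y} : ℝ) - #{n ∈ s | h n ≤ y}| ≤ #{n ∈ s | g n ≠ h n} := by
  refine abs_sub_le_iff.2 ⟨card_filter_le_sub_card_filter_le_le s g h y, ?_⟩
  simpa only [ne_comm] using card_filter_le_sub_card_filter_le_le s h g y

lemma abs_Fx_sub_Fx_le (g f : ℕ → ℝ) {x : ℝ} (hx : 0 ≤ x) (y : ℝ) :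
    |Fx g x y - Fx f x y| ≤ #{n ∈ Icc 1 ⌊x⌋₊ | g n ≠ f n} / x := by
  rw [Fx, Fx, ← sub_div, abs_div, abs_of_nonneg hx]
  gcongr
  exact abs_card_filter_le_sub_card_filter_le_le _ g f y

lemma card_filter_exists_dvd_le (P : ℕ → Prop) [DecidablePred P] (x : ℕ) :
    (#{n ∈ Icc 1 x | ∃ q, P q ∧ q ∣ n} : ℝ≥0∞) ≤
      x * ∑' q : ℕ, if P q then (q : ℝ≥0∞)⁻¹ else 0 := by
  set Q := {q ∈ Icc 1 x | P q}
  have hcover : {n ∈ Icc 1 x | ∃ q, P q ∧ q ∣ n} ⊆ Q.biUnion fun q => {n ∈ Ioc 0 x | q ∣ n} := by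
    intro n hn
    simp only [mem_filter, mem_Icc] at hn
    obtain ⟨⟨hn1, hnx⟩, q, hq, hqn⟩ := hn
    have hqn' := Nat.le_of_dvd hn1 hqn
    have hq0 : q ≠ 0 := by rintro rfl; simp at hqn; omega
    simp only [Q, mem_biUnion, mem_filter, mem_Icc, mem_Ioc]
    exact ⟨q, ⟨⟨by omega, by omega⟩, hq⟩, ⟨by omega, hnx⟩, hqn⟩
  calc (#{n ∈ Icc 1 x | ∃ q, P q ∧ q ∣ n} : ℝ≥0∞)
      ≤ ∑ q ∈ Q, (#{n ∈ Ioc 0 x | q ∣ n} : ℝ≥0∞) := by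
        exact_mod_cast (card_le_card hcover).trans card_biUnion_le
    _ ≤ ∑ q ∈ Q, if P q then x * (q : ℝ≥0∞)⁻¹ else 0 := by
        refine sum_le_sum fun q hq => ?_
        obtain ⟨hqx, hPq⟩ := mem_filter.1 hq
        have hq0 : (q : ℝ≥0∞) ≠ 0 := by simp at hqx ⊢; omega
        rw [if_pos hPq, Nat.Ioc_filter_dvd_card_eq_div, ← div_eq_mul_inv,
          ENNReal.le_div_iff_mul_le (.inl hq0) (.inl (ENNReal.natCast_ne_top q))]
        exact_mod_cast Nat.div_mul_le_self x q
    _ ≤ ∑' q : ℕ, if P q then x * (q : ℝ≥0∞)⁻¹ else 0 := ENNReal.sum_le_tsum Q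
    _ = x * ∑' q : ℕ, if P q then (q : ℝ≥0∞)⁻¹ else 0 := by
        simp only [← ENNReal.tsum_mul_left, mul_ite, mul_zero]

theorem Fx_truncation_error_general (f : ℕ → ℝ) (hadd : IsAdditive f) (R : ℝ)
    (x : ℕ) (y : ℝ) :
    ENNReal.ofReal |Fx (fR f R) (x : ℝ) y - Fx f (x : ℝ) y| ≤
      ∑' n : ℕ, if IsPrimePow n ∧ R < (n : ℝ) ∧ 1 < |f n| then ((n : ENNReal))⁻¹ else 0 := by
  have hdiff : {n ∈ Icc 1 x | fR f R n ≠ f n} ⊆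
      {n ∈ Icc 1 x | ∃ q : ℕ, (IsPrimePow q ∧ R < (q : ℝ) ∧ 1 < |f q|) ∧ q ∣ n} :=
    monotone_filter_right _ fun n hn hne =>
      exists_dvd_of_fR_ne hadd (by simp at hn; omega) hne
  have hcount := (Nat.cast_le.2 (card_le_card hdiff)).trans (card_filter_exists_dvd_le _ x)
  calc ENNReal.ofReal |Fx (fR f R) x y - Fx f x y|
      ≤ ENNReal.ofReal (#{n ∈ Icc 1 x | fR f R n ≠ f n} / x) := by
        refine ENNReal.ofReal_le_ofReal ?_
        simpa using abs_Fx_sub_Fx_le (fR f R) f x.cast_nonneg y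
    _ ≤ #{n ∈ Icc 1 x | fR f R n ≠ f n} / x := by
        exact (ENNReal.ofReal_div_le x.cast_nonneg).trans_eq (by simp)
    _ ≤ _ := ENNReal.div_le_of_le_mul' hcount

/-- Estimate (4.2): for integral `x` and any `y`,
`|F_x(y; R) − F_x(y)| ≤ Σ_{p^ν > R, |f(p^ν)| > 1} 1/p^ν`
(the right-hand side being a sum of nonnegative terms, possibly infinite). -/
theorem Fx_truncation_error (f : ℕ → ℝ) (hadd : IsAdditive f) (R : ℝ) (hR : 3 ≤ R)
    (x : ℕ) (hx : 0 < x) (y : ℝ) :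
    ENNReal.ofReal |Fx (fR f R) (x : ℝ) y - Fx f (x : ℝ) y| ≤
      ∑' n : ℕ, if IsPrimePow n ∧ R < (n : ℝ) ∧ 1 < |f n| then ((n : ENNReal))⁻¹ else 0 :=
  Fx_truncation_error_general f hadd R x y

end
end

section
/- Let f be a real, strongly additive function such that the series Σ_p min(1, f(p)²)/p and Σ_{p : |f(p)|≤1} f(p)/p converge. Suppose 0 < v ≤ 1, 3 ≤ R ≤ e^{1/v}, T ≥ 1, 1 + |τ| ≤ T and T²·η_f(R) ≤ log(1/v). Then, for x ≥ 3, |L(0; x) − L(τ; x)| ≤ 4·log(1/v) + O(1), where L(τ; x) := Σ_{p ≤ x} e^{iτ f_R(p)}/(p−1) and the implied constant is absolute. -/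
open Filter Topology Finset MeasureTheory
open scoped Classical

noncomputable section

/-- L(τ; x) := Σ_{p ≤ x} e^{iτ f_R(p)}/(p − 1). -/
def Lfn (f : ℕ → ℝ) (R : ℝ) (τ x : ℝ) : ℂ :=
  ∑ p ∈ (Finset.range (⌊x⌋₊ + 1)).filter Nat.Prime,
    Complex.exp ((τ * fR f R p : ℝ) * Complex.I) / ((p : ℂ) - 1)

/-! Write `L(0; x) − L(τ; x) = ∑_{p ≤ x} (1 − e^{iτ f_R(p)}) / (p − 1)`.

The primes `p ≤ R` contribute at most `2 ∑_{p ≤ R} 1 / (p − 1) ≤ 2 log 4 · log log R + O(1)`,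
by partial summation against Chebyshev's bound `θ(y) ≤ y log 4`; since `log log R ≤ log (1/v)`
and `2 log 4 < 3`, this is at most `3 log (1/v) + O(1)`.

For `p > R` we have `f_R(p) = f(p)` if `|f(p)| ≤ 1` and `f_R(p) = 0` otherwise. Expanding
`e^{it} = 1 + it + O(t²)`, the large primes contribute at most
`|τ| |∑ f(p)/p| + τ² ∑ f(p)²/p + O(1) ≤ (2|τ| + τ²) η_f(R) + O(1) ≤ T² η_f(R) + O(1)`,
which is at most `log (1/v) + O(1)`.
-/

theorem sum_mul_le_mul_sum_of_antitone {a w : ℕ → ℝ} {C : ℝ} (hw : Antitone w)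
    (hw₀ : ∀ k, 0 ≤ w k) (ha : ∀ n, ∑ k ∈ range n, a k ≤ C * n) (N : ℕ) :
    ∑ k ∈ range N, w k * a k ≤ C * ∑ k ∈ range N, w k := by
  have habel := sum_range_by_parts w a N
  have hone := sum_range_by_parts w (fun _ ↦ (1 : ℝ)) N
  simp only [smul_eq_mul, mul_one, sum_const, card_range, nsmul_eq_mul] at habel hone
  have hsteps : ∑ i ∈ range (N - 1), (w (i + 1) - w i) * (C * (i + 1 : ℕ)) ≤
      ∑ i ∈ range (N - 1), (w (i + 1) - w i) * ∑ k ∈ range (i + 1), a k :=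
    sum_le_sum fun i _ ↦ mul_le_mul_of_nonpos_left (ha _) (sub_nonpos.2 (hw i.le_succ))
  calc _ ≤ w (N - 1) * (C * N) - ∑ i ∈ range (N - 1), (w (i + 1) - w i) * (C * (i + 1 : ℕ)) := by
        rw [habel]
        linarith [mul_le_mul_of_nonneg_left (ha N) (hw₀ (N - 1))]
    _ = C * ∑ k ∈ range N, w k := by
        rw [hone, mul_sub, mul_sum]
        congr 1
        · ring
        · exact sum_congr rfl fun _ _ ↦ by ring

theorem sum_range_prime_log_le (n : ℕ) :
    ∑ k ∈ range n, (if k.Prime then Real.log k else 0) ≤ Real.log 4 * n := by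
  rw [← sum_filter]
  calc _ ≤ ∑ p ∈ n.primesLE, Real.log p :=
        sum_le_sum_of_subset_of_nonneg (filter_subset_filter _ (range_subset_range.2 n.le_succ))
          fun p _ _ ↦ Real.log_natCast_nonneg p
    _ = Chebyshev.theta n := (Chebyshev.theta_eq_sum_primesLE_log n).symm
    _ ≤ Real.log 4 * n := Chebyshev.theta_le_log4_mul_x n.cast_nonneg

theorem one_sub_div_le_log_sub_log {a b : ℝ} (ha : 0 < a) (hb : 0 < b) :
    1 - a / b ≤ Real.log b - Real.log a := by
  rw [← Real.log_div hb.ne' ha.ne', ← inv_div]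
  exact Real.one_sub_inv_le_log_of_pos (div_pos hb ha)

theorem inv_mul_log_le_log_log_sub {x : ℝ} (hx : 1 < x) :
    ((x + 1) * Real.log (x + 1))⁻¹ ≤ Real.log (Real.log (x + 1)) - Real.log (Real.log x) := by
  have hlog : 0 < Real.log x := Real.log_pos hx
  have hlog' : Real.log x < Real.log (x + 1) := Real.log_lt_log (by linarith) (by linarith)
  have hstep : 1 - x / (x + 1) ≤ Real.log (x + 1) - Real.log x :=
    one_sub_div_le_log_sub_log (by linarith) (by linarith)
  calc ((x + 1) * Real.log (x + 1))⁻¹ = (1 - x / (x + 1)) / Real.log (x + 1) := by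
        field_simp; ring
    _ ≤ (Real.log (x + 1) - Real.log x) / Real.log (x + 1) := by gcongr; linarith
    _ = 1 - Real.log x / Real.log (x + 1) := by field_simp [(hlog.trans hlog').ne']
    _ ≤ _ := one_sub_div_le_log_sub_log hlog (hlog.trans hlog')

theorem sum_Ico_inv_mul_log_le {N : ℕ} (hN : 2 ≤ N) :
    ∑ i ∈ Ico 2 N, (((i : ℝ) + 1) * Real.log ((i : ℝ) + 1))⁻¹ ≤
      Real.log (Real.log N) - Real.log (Real.log 2) := by
  calc _ ≤ ∑ i ∈ Ico 2 N, (Real.log (Real.log ((i + 1 : ℕ) : ℝ)) - Real.log (Real.log (i : ℕ))) :=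
        sum_le_sum fun i hi ↦ by
          push_cast
          exact inv_mul_log_le_log_log_sub (by exact_mod_cast (mem_Ico.1 hi).1)
    _ = _ := by rw [sum_Ico_sub (fun i : ℕ ↦ Real.log (Real.log i)) hN]; norm_num

theorem sum_primesLE_inv_le {N : ℕ} (hN : 2 ≤ N) :
    ∑ p ∈ N.primesLE, (p : ℝ)⁻¹ ≤ Real.log 4 * (Real.log (Real.log N) + 4) := by
  -- The weight `1 / (k log k)` is frozen below `k = 2` to make it antitone; no prime lies there.
  set w : ℕ → ℝ := fun k ↦ ((max k 2 : ℕ) * Real.log (max k 2 : ℕ))⁻¹ with hw_def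
  have hw₀ (k : ℕ) : 0 ≤ w k :=
    inv_nonneg.2 (mul_nonneg (Nat.cast_nonneg _) (Real.log_natCast_nonneg _))
  have hw : Antitone w := fun k l hkl ↦ by
    have h2 : (2 : ℝ) ≤ (max k 2 : ℕ) := by exact_mod_cast le_max_right k 2
    have hle : ((max k 2 : ℕ) : ℝ) ≤ (max l 2 : ℕ) := by exact_mod_cast max_le_max_right 2 hkl
    have hlog : 0 < Real.log (max k 2 : ℕ) := Real.log_pos (by linarith)
    exact inv_anti₀ (by positivity)
      (mul_le_mul hle (Real.log_le_log (by linarith) hle) hlog.le (by linarith))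
  have hprimes : ∑ p ∈ N.primesLE, (p : ℝ)⁻¹ =
      ∑ k ∈ range (N + 1), w k * (if k.Prime then Real.log k else 0) := by
    rw [Nat.primesLE_eq_filter_range, sum_filter]
    refine sum_congr rfl fun k _ ↦ ?_
    split_ifs with hk
    · have hlog : 0 < Real.log k := Real.log_pos (by exact_mod_cast hk.one_lt)
      simp only [hw_def, max_eq_left hk.two_le]
      field_simp
    · simp
  have hlog2 : 1 / 2 < Real.log 2 := by linarith [Real.log_two_gt_d9]
  have hweights : ∑ k ∈ range (N + 1), w k ≤ Real.log (Real.log N) + 4 := by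
    have hlarge : ∑ i ∈ Ico 2 N, w (i + 1) ≤ Real.log (Real.log N) - Real.log (Real.log 2) := by
      refine le_of_eq_of_le (sum_congr rfl fun i hi ↦ ?_) (sum_Ico_inv_mul_log_le hN)
      simp only [hw_def, max_eq_left (show 2 ≤ i + 1 by grind)]
      push_cast; rfl
    have hsmall : w 0 + ∑ i ∈ range 2, w (i + 1) = 3 * (2 * Real.log 2)⁻¹ := by
      norm_num [hw_def, sum_range_succ]; ring
    have hloglog2 : -1 ≤ Real.log (Real.log 2) := by
      have := Real.one_sub_inv_le_log_of_pos (by linarith : 0 < Real.log 2)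
      have : (Real.log 2)⁻¹ ≤ 2 := by rw [inv_le_comm₀ (by linarith) two_pos]; linarith
      linarith
    have : (2 * Real.log 2)⁻¹ ≤ 1 := inv_le_one_of_one_le₀ (by linarith)
    rw [sum_range_succ', ← sum_range_add_sum_Ico _ hN]
    linarith
  calc _ = _ := hprimes
    _ ≤ Real.log 4 * ∑ k ∈ range (N + 1), w k :=
        sum_mul_le_mul_sum_of_antitone hw hw₀ sum_range_prime_log_le _
    _ ≤ _ := mul_le_mul_of_nonneg_left hweights (Real.log_nonneg (by norm_num))

theorem sum_inv_mul_sub_one_le_one {s : Finset ℕ} (hs : ∀ n ∈ s, 2 ≤ n) :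
    ∑ n ∈ s, ((n : ℝ) * (n - 1))⁻¹ ≤ 1 := by
  set K := s.sup id + 2
  have hsub : s ⊆ Ico 2 K := fun n hn ↦
    mem_Ico.2 ⟨hs n hn, by have : n ≤ s.sup id := le_sup (f := id) hn; omega⟩
  have hK : (1 : ℝ) ≤ K - 1 := by
    have : (2 : ℝ) ≤ K := by exact_mod_cast Nat.le_add_left 2 _
    linarith
  calc _ ≤ ∑ n ∈ Ico 2 K, ((n : ℝ) * (n - 1))⁻¹ :=
        sum_le_sum_of_subset_of_nonneg hsub fun n hn _ ↦ by
          have : (2 : ℝ) ≤ n := by exact_mod_cast (mem_Ico.1 hn).1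
          have : (0 : ℝ) ≤ n - 1 := by linarith
          positivity
    _ = ∑ n ∈ Ico 2 K, (-((n + 1 : ℕ) - 1 : ℝ)⁻¹ - -((n : ℝ) - 1)⁻¹) :=
        sum_congr rfl fun n hn ↦ by
          have : (2 : ℝ) ≤ n := by exact_mod_cast (mem_Ico.1 hn).1
          have : (n : ℝ) - 1 ≠ 0 := by linarith
          have : (n : ℝ) ≠ 0 := by linarith
          push_cast
          rw [add_sub_cancel_right]
          field_simp
          ring
    _ = 1 - ((K : ℝ) - 1)⁻¹ := by
          rw [sum_Ico_sub (fun n : ℕ ↦ -((n : ℝ) - 1)⁻¹) (by omega)]; norm_num; ring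
    _ ≤ 1 := by linarith [inv_nonneg.2 (zero_le_one.trans hK)]

theorem sum_primesLE_inv_sub_one_le {N : ℕ} (hN : 2 ≤ N) :
    ∑ p ∈ N.primesLE, ((p : ℝ) - 1)⁻¹ ≤ Real.log 4 * (Real.log (Real.log N) + 4) + 1 := by
  have htwo : ∀ p ∈ N.primesLE, 2 ≤ p := fun p hp ↦ (Nat.prime_of_mem_primesLE hp).two_le
  have hsplit : ∑ p ∈ N.primesLE, ((p : ℝ) - 1)⁻¹ =
      ∑ p ∈ N.primesLE, (p : ℝ)⁻¹ + ∑ p ∈ N.primesLE, ((p : ℝ) * (p - 1))⁻¹ := by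
    rw [← sum_add_distrib]
    refine sum_congr rfl fun p hp ↦ ?_
    have : (2 : ℝ) ≤ p := by exact_mod_cast htwo p hp
    have : (p : ℝ) - 1 ≠ 0 := by linarith
    have : (p : ℝ) ≠ 0 := by linarith
    field_simp
    ring
  rw [hsplit]
  exact add_le_add (sum_primesLE_inv_le hN) (sum_inv_mul_sub_one_le_one htwo)

section ExpEstimates

open Complex

theorem norm_exp_mul_I_sub_one_sub_le (t : ℝ) : ‖exp (t * I) - 1 - t * I‖ ≤ t ^ 2 := by
  have hcos : |Real.cos t - 1| ≤ t ^ 2 / 2 := by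
    rw [abs_le]
    constructor <;>
      linarith [Real.one_sub_sq_div_two_le_cos (x := t), Real.cos_le_one t, sq_nonneg t]
  have hsin : |Real.sin t - t| ≤ t ^ 2 / 2 := by
    rcases le_or_gt |t| 3 with ht | ht
    · calc |Real.sin t - t| = |t - Real.sin t| := abs_sub_comm _ _
        _ ≤ |t| ^ 3 / 6 := Real.abs_sub_sin_le t
        _ = |t| * t ^ 2 / 6 := by rw [← sq_abs t]; ring
        _ ≤ 3 * t ^ 2 / 6 := by gcongr
        _ = t ^ 2 / 2 := by ring
    · calc |Real.sin t - t| ≤ |Real.sin t| + |t| := abs_sub _ _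
        _ ≤ 1 + |t| := by linarith [Real.abs_sin_le_one t]
        _ ≤ t ^ 2 / 2 := by nlinarith [sq_abs t]
  have hre : (exp (t * I) - 1 - t * I).re = Real.cos t - 1 := by simp [exp_ofReal_mul_I_re]
  have him : (exp (t * I) - 1 - t * I).im = Real.sin t - t := by simp [exp_ofReal_mul_I_im]
  calc _ ≤ |(exp (t * I) - 1 - t * I).re| + |(exp (t * I) - 1 - t * I).im| :=
        norm_le_abs_re_add_abs_im _
    _ ≤ t ^ 2 := by rw [hre, him]; linarith

theorem norm_one_sub_exp_mul_I_le_two (t : ℝ) : ‖1 - exp (t * I)‖ ≤ 2 := by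
  calc _ ≤ ‖(1 : ℂ)‖ + ‖exp (t * I)‖ := norm_sub_le _ _
    _ = 2 := by rw [norm_one, norm_exp_ofReal_mul_I]; norm_num

theorem norm_natCast_sub_one {n : ℕ} (hn : 1 ≤ n) : ‖(n : ℂ) - 1‖ = n - 1 := by
  have h : (n : ℂ) - 1 = ((n - 1 : ℝ) : ℂ) := by push_cast; ring
  have : (1 : ℝ) ≤ n := by exact_mod_cast hn
  rw [h, norm_real, Real.norm_eq_abs, abs_of_nonneg (by linarith)]

theorem norm_sum_one_sub_exp_div_le_two_mul {s : Finset ℕ} (hs : ∀ n ∈ s, 2 ≤ n) (t : ℕ → ℝ) :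
    ‖∑ n ∈ s, (1 - exp (t n * I)) / ((n : ℂ) - 1)‖ ≤ 2 * ∑ n ∈ s, ((n : ℝ) - 1)⁻¹ := by
  rw [mul_sum]
  refine norm_sum_le_of_le s fun n hn ↦ ?_
  rw [norm_div, norm_natCast_sub_one (by linarith [hs n hn]), div_eq_mul_inv]
  have : (0 : ℝ) ≤ (n - 1 : ℝ)⁻¹ := by
    have : (2 : ℝ) ≤ n := by exact_mod_cast hs n hn
    exact inv_nonneg.2 (by linarith)
  exact mul_le_mul_of_nonneg_right (norm_one_sub_exp_mul_I_le_two _) this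

theorem norm_sum_one_sub_exp_div_le {s : Finset ℕ} (hs : ∀ n ∈ s, 2 ≤ n) (t : ℕ → ℝ) :
    ‖∑ n ∈ s, (1 - exp (t n * I)) / ((n : ℂ) - 1)‖ ≤
      |∑ n ∈ s, t n / n| + ∑ n ∈ s, t n ^ 2 / n + 2 := by
  have hterm : ∀ n ∈ s, (1 - exp (t n * I)) / ((n : ℂ) - 1) =
      -(I * ((t n / n : ℝ) : ℂ)) - (exp (t n * I) - 1 - t n * I) / n +
        (1 - exp (t n * I)) * (((n : ℝ) * (n - 1))⁻¹ : ℝ) := fun n hn ↦ by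
    have h2 : (2 : ℝ) ≤ n := by exact_mod_cast hs n hn
    have hn0 : (n : ℂ) ≠ 0 := by exact_mod_cast (by linarith [hs n hn] : n ≠ 0)
    have hn1 : (n : ℂ) - 1 ≠ 0 := by
      rw [← norm_ne_zero_iff, norm_natCast_sub_one (by linarith [hs n hn])]; linarith
    push_cast
    field_simp
    ring
  have hlin : ‖∑ n ∈ s, -(I * ((t n / n : ℝ) : ℂ))‖ = |∑ n ∈ s, t n / n| := by
    rw [sum_neg_distrib, ← mul_sum, ← ofReal_sum, norm_neg, norm_mul, norm_I, one_mul, norm_real,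
      Real.norm_eq_abs]
  have hquad : ‖∑ n ∈ s, (exp (t n * I) - 1 - t n * I) / n‖ ≤ ∑ n ∈ s, t n ^ 2 / n :=
    norm_sum_le_of_le s fun n _ ↦ by
      rw [norm_div, Complex.norm_natCast]
      exact div_le_div_of_nonneg_right (norm_exp_mul_I_sub_one_sub_le _) n.cast_nonneg
  have hrest : ‖∑ n ∈ s, (1 - exp (t n * I)) * (((n : ℝ) * (n - 1))⁻¹ : ℝ)‖ ≤ 2 :=
    calc _ ≤ ∑ n ∈ s, 2 * ((n : ℝ) * (n - 1))⁻¹ := norm_sum_le_of_le s fun n hn ↦ by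
          have h2 : (2 : ℝ) ≤ n := by exact_mod_cast hs n hn
          have : 0 ≤ ((n : ℝ) * (n - 1))⁻¹ := inv_nonneg.2 (by nlinarith)
          rw [norm_mul, norm_real, Real.norm_of_nonneg this]
          exact mul_le_mul_of_nonneg_right (norm_one_sub_exp_mul_I_le_two _) this
      _ ≤ 2 := by rw [← mul_sum]; linarith [sum_inv_mul_sub_one_le_one hs]
  rw [sum_congr rfl hterm, sum_add_distrib, sum_sub_distrib]
  refine (norm_add_le _ _).trans ?_
  linarith [norm_sub_le (∑ n ∈ s, -(I * ((t n / n : ℝ) : ℂ)))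
    (∑ n ∈ s, (exp (t n * I) - 1 - t n * I) / n)]

end ExpEstimates

theorem fR_prime (f : ℕ → ℝ) (R : ℝ) {p : ℕ} (hp : p.Prime) :
    fR f R p = if (p : ℝ) ≤ R ∨ |f p| ≤ 1 then f p else 0 := by
  rw [fR, hp.primeFactors, sum_singleton, hp.factorization_self, pow_one]

theorem summable_isPrimePow_not_prime_inv :
    Summable fun n : ℕ ↦ if IsPrimePow n ∧ ¬ n.Prime then (n : ℝ)⁻¹ else 0 := by
  -- Proper prime powers are the `p ^ (j + 2)`, and `p ^ -(j + 2) ≤ p ^ -2 * 2 ^ -j`.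
  set g : Nat.Primes × ℕ → ℕ := fun q ↦ (q.1 : ℕ) ^ (q.2 + 2)
  have hg : Function.Injective g := fun q r h ↦ by
    obtain ⟨hpq, hjk⟩ := Nat.Prime.pow_inj q.1.prop r.1.prop h
    exact Prod.ext (Subtype.ext hpq) (by omega)
  have hrange : ∀ n ∉ Set.range g, (if IsPrimePow n ∧ ¬ n.Prime then (n : ℝ)⁻¹ else 0) = 0 := by
    intro n hn
    refine if_neg fun ⟨hpow, hnp⟩ ↦ hn ?_
    obtain ⟨p, k, hp, hk, rfl⟩ := (isPrimePow_nat_iff n).1 hpow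
    obtain ⟨j, rfl⟩ : ∃ j, k = j + 2 := ⟨k - 2, by
      have : k ≠ 1 := by rintro rfl; exact hnp (by simpa using hp)
      omega⟩
    exact ⟨(⟨p, hp⟩, j), rfl⟩
  have hinvsq : Summable fun p : Nat.Primes ↦ (((p : ℕ) : ℝ) ^ 2)⁻¹ :=
    (Real.summable_nat_pow_inv.2 one_lt_two).comp_injective Nat.Primes.coe_nat_injective
  have hmajorant : Summable fun q : Nat.Primes × ℕ ↦ (((q.1 : ℕ) : ℝ) ^ 2)⁻¹ * (1 / 2) ^ q.2 :=
    hinvsq.mul_of_nonneg summable_geometric_two (fun _ ↦ by positivity) (fun _ ↦ by positivity)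
  refine (hg.summable_iff hrange).1 (hmajorant.of_nonneg_of_le (fun q ↦ ?_) (fun q ↦ ?_))
  · dsimp only [Function.comp]
    split_ifs <;> positivity
  · have h2 : (2 : ℝ) ≤ (q.1 : ℕ) := by exact_mod_cast q.1.prop.two_le
    dsimp only [Function.comp, g]
    split_ifs
    · push_cast
      rw [pow_add, mul_comm, mul_inv, one_div, inv_pow]
      gcongr
    · positivity

theorem summable_isPrimePow_min_sq_div {f : ℕ → ℝ}
    (hf : Summable fun p : Nat.Primes ↦ min 1 (f p ^ 2) / (p : ℝ)) (y : ℝ) :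
    Summable fun n : ℕ ↦ if IsPrimePow n ∧ y < n then min 1 (f n ^ 2) / n else 0 := by
  have hprime : Summable fun n : ℕ ↦ if n.Prime then min 1 (f n ^ 2) / n else 0 := by
    refine (Nat.Primes.coe_nat_injective.summable_iff
      fun n hn ↦ if_neg fun hp ↦ hn ⟨⟨n, hp⟩, rfl⟩).1 ?_
    exact hf.congr fun p ↦ (if_pos p.prop).symm
  refine (hprime.add summable_isPrimePow_not_prime_inv).of_nonneg_of_le (fun n ↦ ?_) (fun n ↦ ?_)
  · split_ifs <;> positivity
  · have h0 : 0 ≤ min 1 (f n ^ 2) / n := by positivity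
    have hmin : min 1 (f n ^ 2) / n ≤ (n : ℝ)⁻¹ := by
      rw [div_eq_mul_inv]
      exact mul_le_of_le_one_left (by positivity) (min_le_left _ _)
    split_ifs <;> simp_all

namespace EtaBound

variable {f : ℕ → ℝ} {η : ℝ → ℝ}

theorem nonneg (hη : EtaBound f η) (y : ℝ) : 0 ≤ η y :=
  le_of_tendsto hη.2.2.1 (eventually_ge_atTop y |>.mono fun _ hz ↦ hη.2.1 hz)

theorem sum_fR_sq_div_le (hη : EtaBound f η)
    (hf : Summable fun p : Nat.Primes ↦ min 1 (f p ^ 2) / (p : ℝ)) {R : ℝ} (hR : 1 ≤ R)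
    {s : Finset ℕ} (hs : ∀ p ∈ s, p.Prime ∧ R < p) :
    ∑ p ∈ s, fR f R p ^ 2 / p ≤ η R := by
  calc _ ≤ ∑ n ∈ s, if IsPrimePow n ∧ R < n then min 1 (f n ^ 2) / n else 0 :=
        sum_le_sum fun p hps ↦ by
          obtain ⟨hp, hpR⟩ := hs p hps
          rw [if_pos ⟨hp.isPrimePow, hpR⟩, fR_prime f R hp]
          gcongr
          split_ifs with h
          · have : |f p| ≤ 1 := h.resolve_left (not_le.2 hpR)
            exact le_min (by rw [← sq_abs]; exact pow_le_one₀ (abs_nonneg _) this) le_rfl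
          · simpa using sq_nonneg (f p)
    -- Without summability the `tsum` in `EtaBound` would be the junk value `0`.
    _ ≤ ∑' n : ℕ, if IsPrimePow n ∧ R < n then min 1 (f n ^ 2) / n else 0 :=
        (summable_isPrimePow_min_sq_div hf R).sum_le_tsum s fun n _ ↦ by split_ifs <;> positivity
    _ ≤ η R := hη.2.2.2.2 R hR

theorem abs_sum_fR_div_le (hη : EtaBound f η) {R : ℝ} (hR : 1 ≤ R) (M : ℕ) :
    |∑ p ∈ M.primesLE with R < (p : ℕ), fR f R p / p| ≤ 2 * η R := by
  set S : ℝ → ℕ → ℝ := fun z N ↦ ∑ p ∈ range N with p.Prime ∧ z < (p : ℕ) ∧ |f p| ≤ 1, f p / p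
  have hfR : ∑ p ∈ M.primesLE with R < (p : ℕ), fR f R p / p = S R (M + 1) := by
    simp only [S, Nat.primesLE_eq_filter_range, filter_filter, sum_filter]
    refine sum_congr rfl fun p _ ↦ ?_
    by_cases h : p.Prime ∧ R < p
    · simp only [fR_prime f R h.1, not_le.2 h.2, false_or, h, true_and]
      split_ifs <;> simp
    · rw [if_neg h, if_neg fun h' ↦ h ⟨h'.1, h'.2.1⟩]
  rw [hfR]
  rcases lt_or_ge (M : ℝ) R with hMR | hRM
  · have : S R (M + 1) = 0 := sum_eq_zero fun p hp ↦ by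
      simp only [mem_filter, mem_range] at hp
      have : (p : ℝ) ≤ M := by exact_mod_cast Nat.lt_succ_iff.1 hp.1
      linarith [hp.2.2.1]
    rw [this, abs_zero]
    exact mul_nonneg zero_le_two (hη.nonneg R)
  -- The finite sum is the difference of the tails of `EtaBound` starting at `R` and at `M`.
  obtain ⟨ℓR, hℓR, hbR⟩ := hη.2.2.2.1 R hR
  obtain ⟨ℓM, hℓM, hbM⟩ := hη.2.2.2.1 M (hR.trans hRM)
  have hsplit : ∀ N, M + 1 ≤ N → S R N = S R (M + 1) + S M N := fun N hN ↦ by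
    simp only [S]
    rw [← sum_filter_add_sum_filter_not _ fun p ↦ p ≤ M, filter_filter, filter_filter]
    congr 1 <;> refine sum_congr (ext fun p ↦ ?_) fun _ _ ↦ rfl <;>
      simp only [mem_filter, mem_range, not_le]
    · constructor
      · rintro ⟨-, hQ, hpM⟩
        exact ⟨by omega, hQ⟩
      · rintro ⟨hpM, hQ⟩
        exact ⟨by omega, hQ, by omega⟩
    · constructor
      · rintro ⟨hpN, ⟨hp, -, hf⟩, hpM⟩
        exact ⟨hpN, hp, by exact_mod_cast hpM, hf⟩
      · rintro ⟨hpN, hp, hpM, hf⟩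
        have hpM' : M < p := by exact_mod_cast hpM
        exact ⟨hpN, ⟨hp, hRM.trans_lt (by exact_mod_cast hpM'), hf⟩, hpM'⟩
  have hlim : S R (M + 1) = ℓR - ℓM := by
    refine eq_sub_of_add_eq (tendsto_nhds_unique ?_ hℓR)
    exact (hℓM.const_add _).congr' (eventually_atTop.2 ⟨M + 1, fun N hN ↦ (hsplit N hN).symm⟩)
  rw [hlim]
  calc |ℓR - ℓM| ≤ |ℓR| + |ℓM| := abs_sub _ _
    _ ≤ η R + η M := add_le_add hbR hbM
    _ ≤ 2 * η R := by linarith [hη.2.1 hRM]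

end EtaBound

section PrimeSums

open Complex

theorem Lfn_zero_sub (f : ℕ → ℝ) (R τ x : ℝ) :
    Lfn f R 0 x - Lfn f R τ x =
      ∑ p ∈ ⌊x⌋₊.primesLE, (1 - exp ((τ * fR f R p : ℝ) * I)) / ((p : ℂ) - 1) := by
  rw [Lfn, Lfn, ← sum_sub_distrib, Nat.primesLE_eq_filter_range]
  refine sum_congr rfl fun p _ ↦ ?_
  simp [sub_div]

theorem norm_sum_small_primes_le {R : ℝ} (hR : 2 ≤ R) (M : ℕ) (t : ℕ → ℝ) :
    ‖∑ p ∈ M.primesLE with (p : ℕ) ≤ R, (1 - exp (t p * I)) / ((p : ℂ) - 1)‖ ≤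
      2 * (Real.log 4 * (Real.log (Real.log R) + 4) + 1) := by
  have hR' : 2 ≤ ⌊R⌋₊ := Nat.le_floor (by exact_mod_cast hR)
  have hsub : M.primesLE.filter (fun p : ℕ ↦ (p : ℝ) ≤ R) ⊆ ⌊R⌋₊.primesLE := fun p hp ↦ by
    simp only [mem_filter, Nat.primesLE_eq_filter_range, mem_range] at hp ⊢
    exact ⟨Nat.lt_succ_of_le (Nat.le_floor hp.2), hp.1.2⟩
  have hloglog : Real.log (Real.log ⌊R⌋₊) ≤ Real.log (Real.log R) := by
    have h2 : (2 : ℝ) ≤ ⌊R⌋₊ := by exact_mod_cast hR'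
    exact Real.log_le_log (Real.log_pos (by linarith))
      (Real.log_le_log (by linarith) (Nat.floor_le (by linarith)))
  have htwo : ∀ p ∈ ⌊R⌋₊.primesLE, 2 ≤ p := fun p hp ↦ (Nat.prime_of_mem_primesLE hp).two_le
  calc _ ≤ 2 * ∑ p ∈ M.primesLE with (p : ℕ) ≤ R, ((p : ℝ) - 1)⁻¹ :=
        norm_sum_one_sub_exp_div_le_two_mul (fun p hp ↦ htwo p (hsub hp)) t
    _ ≤ 2 * ∑ p ∈ ⌊R⌋₊.primesLE, ((p : ℝ) - 1)⁻¹ := by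
        refine mul_le_mul_of_nonneg_left (sum_le_sum_of_subset_of_nonneg hsub fun p hp _ ↦ ?_)
          zero_le_two
        have : (2 : ℝ) ≤ p := by exact_mod_cast htwo p hp
        exact inv_nonneg.2 (by linarith)
    _ ≤ 2 * (Real.log 4 * (Real.log (Real.log ⌊R⌋₊) + 4) + 1) := by
        gcongr; exact sum_primesLE_inv_sub_one_le hR'
    _ ≤ _ := by gcongr

theorem EtaBound.norm_sum_large_primes_le {f : ℕ → ℝ} {η : ℝ → ℝ} (hη : EtaBound f η)
    (hf : Summable fun p : Nat.Primes ↦ min 1 (f p ^ 2) / (p : ℝ)) {R : ℝ} (hR : 1 ≤ R)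
    (M : ℕ) (τ : ℝ) :
    ‖∑ p ∈ M.primesLE with R < (p : ℕ), (1 - exp ((τ * fR f R p : ℝ) * I)) / ((p : ℂ) - 1)‖ ≤
      2 * |τ| * η R + τ ^ 2 * η R + 2 := by
  have hs : ∀ p ∈ M.primesLE.filter (fun p : ℕ ↦ R < p), p.Prime ∧ R < p := fun p hp ↦
    ⟨Nat.prime_of_mem_primesLE (mem_filter.1 hp).1, (mem_filter.1 hp).2⟩
  have hlin : |∑ p ∈ M.primesLE with R < (p : ℕ), τ * fR f R p / p| ≤ |τ| * (2 * η R) := by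
    simp only [mul_div_assoc, ← mul_sum, abs_mul]
    exact mul_le_mul_of_nonneg_left (hη.abs_sum_fR_div_le hR M) (abs_nonneg τ)
  have hquad : ∑ p ∈ M.primesLE with R < (p : ℕ), (τ * fR f R p) ^ 2 / p ≤ τ ^ 2 * η R := by
    simp only [mul_pow, mul_div_assoc, ← mul_sum]
    exact mul_le_mul_of_nonneg_left (hη.sum_fR_sq_div_le hf hR hs) (sq_nonneg τ)
  have := norm_sum_one_sub_exp_div_le (fun p hp ↦ (hs p hp).1.two_le) fun p ↦ τ * fR f R p
  linarith

end PrimeSums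

/-- Estimate (5.9): `|L(0; x) − L(τ; x)| ≤ 4 log(1/v) + O(1)` with absolute constant. -/
theorem L_difference_bound :
    ∃ C : ℝ, 0 < C ∧
      ∀ (f : ℕ → ℝ) (η : ℝ → ℝ), IsStronglyAdditive f → EWConv f → EtaBound f η →
        ∀ v R T τ x : ℝ,
          0 < v → v ≤ 1 → 3 ≤ R → R ≤ Real.exp (1/v) →
          1 ≤ T → 1 + |τ| ≤ T → T^2 * η R ≤ Real.log (1/v) →
          3 ≤ x →
          ‖Lfn f R 0 x - Lfn f R τ x‖ ≤ 4 * Real.log (1/v) + C := by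
  refine ⟨16, by norm_num, fun f η _ hf hη v R T τ x hv hv1 hR hRv hT hτT hTη _ ↦ ?_⟩
  have hL : 0 ≤ Real.log (1 / v) := Real.log_nonneg (by rw [le_div_iff₀ hv]; linarith)
  have hloglog : Real.log (Real.log R) ≤ Real.log (1 / v) := by
    have := Real.log_le_log (by linarith) hRv
    rw [Real.log_exp] at this
    exact Real.log_le_log (Real.log_pos (by linarith)) this
  have hlog4₀ : 0 ≤ Real.log 4 := Real.log_nonneg (by norm_num)
  have hlog4 : Real.log 4 ≤ 3 / 2 := by
    rw [show (4 : ℝ) = 2 ^ 2 by norm_num, Real.log_pow]; push_cast; linarith [Real.log_two_lt_d9]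
  have hηR := hη.nonneg R
  have hsmall := norm_sum_small_primes_le (R := R) (by linarith) ⌊x⌋₊ fun p ↦ τ * fR f R p
  have hlarge := hη.norm_sum_large_primes_le hf.1 (R := R) (by linarith) ⌊x⌋₊ τ
  have hτ : |τ| ≤ T - 1 := by linarith
  have hτ2 : τ ^ 2 ≤ (T - 1) ^ 2 := by rw [← sq_abs]; gcongr
  rw [Lfn_zero_sub, ← sum_filter_add_sum_filter_not _ fun p : ℕ ↦ (p : ℝ) ≤ R]
  simp only [not_le]
  refine (norm_add_le _ _).trans ?_
  linarith [mul_le_mul_of_nonneg_right hτ hηR, mul_le_mul_of_nonneg_right hτ2 hηR,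
    mul_le_mul_of_nonneg_left (add_le_add_right hloglog 4) hlog4₀,
    mul_le_mul_of_nonneg_right hlog4 (by linarith : 0 ≤ Real.log (1 / v) + 4)]

end
end
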